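/- arXiv:1604.06839 — 3 statements merged into one kernel-verified Lean document; each statement's English description precedes it below -/
import Mathlib

section
/- Let c̄ : ℝ → ℝ be the extended middle-λ Cantor function (equal to 0 for x < 0, the middle-λ Cantor function c on [0,1], and 1 for x > 1). Then c̄ is subadditive: c̄(x + y) ≤ c̄(x) + c̄(y) for all x, y ∈ ℝ with x, y ≥ 0. -/
open Set

/-- The map `H` on bounded functions defining the middle-`l` Cantor function. -/
noncomputable def cantorMap (l : ℝ) (g : ℝ → ℝ) : ℝ → ℝ := fun x =>
  if x < (1 - l) / 2 then (1 / 2) * g (2 / (1 - l) * x)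
  else if x < (1 + l) / 2 then 1 / 2
  else 1 / 2 + (1 / 2) * g (2 / (1 - l) * x - (1 + l) / (1 - l))

/-- The iterates of the middle-`l` Cantor recursion starting from `c₀`. -/
noncomputable def cantorSeq (l : ℝ) (c0 : ℝ → ℝ) : ℕ → ℝ → ℝ
  | 0 => c0
  | n + 1 => cantorMap l (cantorSeq l c0 n)

/-- Extension of a function on `[0,1]` by `0` to the left of `0` and `1` to the right of `1`. -/
noncomputable def extendUnit (c : ℝ → ℝ) : ℝ → ℝ := fun x =>
  if x < 0 then 0 else if x ≤ 1 then c x else 1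

/-!
Write `a = (1 - λ) / 2`. The extended Cantor function `F` is monotone, equals `1` on `[1, ∞)`,
satisfies `F x = F (x / a) / 2` on `[0, a]` and `F (1 - x) = 1 - F x` on `[0, 1]`; the argument
uses nothing else. Subadditivity up to an error `ε` is proved together with a companion inequality
`F p + F w ≤ F (p + w + g) + ε` for `p + w + g ≤ 1` and a gap `g ≥ (1 - 2a) / a`, the middle gap
rescaled by `x ↦ x / a`. Splitting according to where the points fall among `[0, a]`,
`[a, 1 - a]` and `[1 - a, 1]`, each inequality with error `ε / 2` reduces to the two inequalities
with error `ε` at rescaled points, so starting from `ε = 1` and halving gives subadditivity.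

That `extendUnit c` has these properties follows from the fixed-point equation. Monotonicity, the
range `[0, 1]` and uniqueness of the bounded fixed point (hence the symmetry, since
`x ↦ 1 - c (1 - x)` is another one) pass to `c` from the iterates `cantorSeq` started at `0`,
which converge to `c` because `cantorMap` halves distances in sup norm.
-/

open Filter Topology

structure IsCantorStaircase (a : ℝ) (F : ℝ → ℝ) : Prop where
  ratio_pos : 0 < a
  ratio_le_half : a ≤ 1 / 2
  monotone : Monotone F
  eq_one : ∀ x, 1 ≤ x → F x = 1
  left : ∀ x, 0 ≤ x → x ≤ a → F x = F (x / a) / 2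
  symm : ∀ x, 0 ≤ x → x ≤ 1 → F (1 - x) = 1 - F x

def SubadditiveUpTo (F : ℝ → ℝ) (ε : ℝ) : Prop :=
  ∀ x y, 0 ≤ x → 0 ≤ y → F (x + y) ≤ F x + F y + ε

def SuperadditiveAcrossGapUpTo (a : ℝ) (F : ℝ → ℝ) (ε : ℝ) : Prop :=
  ∀ p w g, 0 ≤ p → 0 ≤ w → (1 - 2 * a) / a ≤ g → p + w + g ≤ 1 →
    F p + F w ≤ F (p + w + g) + ε

namespace IsCantorStaircase

variable {a ε : ℝ} {F : ℝ → ℝ}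

theorem map_zero (hF : IsCantorStaircase a F) : F 0 = 0 := by
  have h := hF.left 0 le_rfl hF.ratio_pos.le
  rw [zero_div] at h
  linarith

theorem nonneg (hF : IsCantorStaircase a F) {x : ℝ} (hx : 0 ≤ x) : 0 ≤ F x :=
  hF.map_zero ▸ hF.monotone hx

theorem le_one (hF : IsCantorStaircase a F) (x : ℝ) : F x ≤ 1 :=
  (hF.monotone (le_max_left x 1)).trans (hF.eq_one _ (le_max_right x 1)).le

theorem map_ratio (hF : IsCantorStaircase a F) : F a = 1 / 2 := by
  rw [hF.left a hF.ratio_pos.le le_rfl, div_self hF.ratio_pos.ne', hF.eq_one 1 le_rfl]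

theorem half_le (hF : IsCantorStaircase a F) {x : ℝ} (hx : a ≤ x) : 1 / 2 ≤ F x :=
  hF.map_ratio ▸ hF.monotone hx

theorem le_half (hF : IsCantorStaircase a F) {x : ℝ} (hx : x ≤ 1 - a) : F x ≤ 1 / 2 := by
  have h := hF.symm a hF.ratio_pos.le (by linarith [hF.ratio_le_half])
  rw [hF.map_ratio] at h
  linarith [hF.monotone hx]

theorem right (hF : IsCantorStaircase a F) {x : ℝ} (hx : 1 - a ≤ x) (hx1 : x ≤ 1) :
    F x = 1 / 2 + F ((x - (1 - a)) / a) / 2 := by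
  have hmem := unitInterval.div_mem (x := 1 - x) (by linarith) hF.ratio_pos.le (by linarith)
  have h1 := hF.symm (1 - x) (by linarith) (by linarith [hF.ratio_le_half])
  have h2 := hF.left (1 - x) (by linarith) (by linarith)
  have h3 := hF.symm _ hmem.1 hmem.2
  have e : 1 - (1 - x) / a = (x - (1 - a)) / a := by field_simp [hF.ratio_pos.ne']; ring
  rw [sub_sub_cancel] at h1
  rw [e] at h3
  linarith

theorem middle_gap_le (hF : IsCantorStaircase a F) {g : ℝ} (hg : (1 - 2 * a) / a ≤ g) :
    1 - 2 * a ≤ g :=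
  (le_div_self (by linarith [hF.ratio_le_half]) hF.ratio_pos
    (by linarith [hF.ratio_le_half])).trans hg

theorem gap_le_div (hF : IsCantorStaircase a F) {g : ℝ} (hg : (1 - 2 * a) / a ≤ g) :
    (1 - 2 * a) / a ≤ g / a :=
  hg.trans (le_div_self (by linarith [hF.middle_gap_le hg, hF.ratio_le_half]) hF.ratio_pos
    (by linarith [hF.ratio_le_half]))

theorem map_add_le_of_one_le_add (hF : IsCantorStaircase a F) {x y : ℝ} (hx : 0 ≤ x)
    (hy : 0 ≤ y) (h : 1 ≤ x + y) : F (x + y) ≤ F x + F y := by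
  have hs := hF.le_one (x + y)
  rcases le_total 1 x with hx1 | hx1
  · linarith [hF.eq_one x hx1, hF.nonneg hy]
  · linarith [hF.symm x hx hx1, hF.monotone (show 1 - x ≤ y by linarith)]

theorem add_le_one (hF : IsCantorStaircase a F) {p w : ℝ} (hp : 0 ≤ p) (hw : 0 ≤ w)
    (h : p + w ≤ 1) : F p + F w ≤ 1 := by
  linarith [hF.symm p hp (by linarith), hF.monotone (show w ≤ 1 - p by linarith)]

theorem half_le_add (hF : IsCantorStaircase a F) {x y : ℝ} (hx : 0 ≤ x) (hy : 0 ≤ y)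
    (h : a ≤ x + y) : 1 / 2 ≤ F x + F y := by
  rcases le_total a x with hxa | hxa
  · linarith [hF.half_le hxa, hF.nonneg hy]
  rcases le_total a y with hya | hya
  · linarith [hF.half_le hya, hF.nonneg hx]
  have ha := hF.ratio_pos
  have h1 : 1 ≤ x / a + y / a := by
    rw [← add_div, le_div_iff₀ ha]; linarith
  have := hF.map_add_le_of_one_le_add (by positivity) (by positivity) h1
  rw [hF.eq_one _ h1] at this
  rw [hF.left x hx hxa, hF.left y hy hya]
  linarith

theorem add_le_half (hF : IsCantorStaircase a F) {p w : ℝ} (hp : 0 ≤ p) (hw : 0 ≤ w)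
    (h : p + w ≤ a) : F p + F w ≤ 1 / 2 := by
  have ha := hF.ratio_pos
  have := hF.add_le_one (p := p / a) (w := w / a) (by positivity) (by positivity)
    (by rw [← add_div]; exact div_le_one_of_le₀ h ha.le)
  rw [hF.left p hp (by linarith), hF.left w hw (by linarith)]
  linarith

theorem map_add_le_of_add_le_ratio (hF : IsCantorStaircase a F) (hP : SubadditiveUpTo F ε)
    {x y : ℝ} (hx : 0 ≤ x) (hy : 0 ≤ y) (h : x + y ≤ a) :
    F (x + y) ≤ F x + F y + ε / 2 := by
  have ha := hF.ratio_pos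
  have := hP (x / a) (y / a) (by positivity) (by positivity)
  rw [hF.left x hx (by linarith), hF.left y hy (by linarith), hF.left _ (by linarith) h, add_div]
  linarith

theorem map_add_le_of_le_ratio (hF : IsCantorStaircase a F)
    (hR : SuperadditiveAcrossGapUpTo a F ε) {x y : ℝ} (hx : 0 ≤ x) (hy : 0 ≤ y)
    (hxa : x ≤ a) (hya : y ≤ a) (h : 1 - a ≤ x + y) :
    F (x + y) ≤ F x + F y + ε / 2 := by
  have ha := hF.ratio_pos
  have hxm := unitInterval.div_mem hx ha.le hxa
  have hym := unitInterval.div_mem hy ha.le hya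
  -- `1 - x / a` and the rescaled excess `(x + y - (1 - a)) / a` sit in `[0, y / a]` separated by
  -- a rescaled middle gap; the symmetry turns `F (1 - x / a)` back into `1 - F (x / a)`.
  have hsum : 1 - x / a + (x + y - (1 - a)) / a + (1 - 2 * a) / a = y / a := by
    field_simp; ring
  have := hR (1 - x / a) ((x + y - (1 - a)) / a) ((1 - 2 * a) / a) (by linarith [hxm.2])
    (div_nonneg (by linarith) ha.le) le_rfl (by rw [hsum]; exact hym.2)
  rw [hsum, hF.symm _ hxm.1 hxm.2] at this
  rw [hF.right h (by linarith [hF.ratio_le_half]), hF.left x hx hxa, hF.left y hy hya]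
  linarith

theorem map_add_le_of_one_sub_ratio_le_add (hF : IsCantorStaircase a F)
    (hP : SubadditiveUpTo F ε) (hR : SuperadditiveAcrossGapUpTo a F ε) (hε : 0 ≤ ε)
    {x y : ℝ} (hx : 0 ≤ x) (hxy : x ≤ y) (h : 1 - a ≤ x + y) (h1 : x + y ≤ 1) :
    F (x + y) ≤ F x + F y + ε / 2 := by
  have ha := hF.ratio_pos
  rcases le_total y a with hya | hya
  · exact hF.map_add_le_of_le_ratio hR hx (hx.trans hxy) (hxy.trans hya) hya h
  rw [hF.right h h1]
  rcases le_total (1 - a) y with hyb | hyb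
  · have := hP ((y - (1 - a)) / a) (x / a) (div_nonneg (by linarith) ha.le) (by positivity)
    rw [hF.right hyb (by linarith [hF.nonneg hx]), hF.left x hx (by linarith)]
    rw [← add_div, show y - (1 - a) + x = x + y - (1 - a) by ring] at this
    linarith
  have hy := hF.half_le hya
  rcases le_total a x with hxa | hxa
  · linarith [hF.half_le hxa, hF.le_one ((x + y - (1 - a)) / a)]
  · have := hF.monotone (div_le_div_of_nonneg_right (show x + y - (1 - a) ≤ x by linarith) ha.le)
    rw [hF.left x hx hxa]
    linarith

theorem subadditiveUpTo_half (hF : IsCantorStaircase a F) (hP : SubadditiveUpTo F ε)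
    (hR : SuperadditiveAcrossGapUpTo a F ε) (hε : 0 ≤ ε) : SubadditiveUpTo F (ε / 2) := by
  intro x y hx hy
  wlog hxy : x ≤ y generalizing x y
  · simpa only [add_comm] using this y x hy hx (le_of_not_ge hxy)
  rcases le_total (x + y) a with h | ha
  · exact hF.map_add_le_of_add_le_ratio hP hx hy h
  rcases le_total (x + y) (1 - a) with h | hb
  · linarith [hF.le_half h, hF.half_le_add hx hy ha]
  rcases le_total (x + y) 1 with h | h
  · exact hF.map_add_le_of_one_sub_ratio_le_add hP hR hε hx hxy hb h
  · linarith [hF.map_add_le_of_one_le_add hx hy h]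

theorem add_le_map_of_add_le_ratio (hF : IsCantorStaircase a F)
    (hR : SuperadditiveAcrossGapUpTo a F ε) {p w g : ℝ} (hp : 0 ≤ p) (hw : 0 ≤ w)
    (hg : (1 - 2 * a) / a ≤ g) (h : p + w + g ≤ a) :
    F p + F w ≤ F (p + w + g) + ε / 2 := by
  have ha := hF.ratio_pos
  have hg0 : 0 ≤ g := by linarith [hF.middle_gap_le hg, hF.ratio_le_half]
  have hsum : p / a + w / a + g / a = (p + w + g) / a := by ring
  have := hR (p / a) (w / a) (g / a) (by positivity) (by positivity) (hF.gap_le_div hg)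
    (by rw [hsum]; exact div_le_one_of_le₀ h ha.le)
  rw [hsum] at this
  rw [hF.left p hp (by linarith), hF.left w hw (by linarith), hF.left _ (by linarith) h]
  linarith

theorem add_le_map_of_le_ratio (hF : IsCantorStaircase a F) (hP : SubadditiveUpTo F ε)
    (hε : 0 ≤ ε) {p w g : ℝ} (hp : 0 ≤ p) (hw : 0 ≤ w) (hpa : p ≤ a) (hwa : w ≤ a)
    (hg : 1 - 2 * a ≤ g) (h : 1 - a ≤ p + w + g) (h1 : p + w + g ≤ 1) :
    F p + F w ≤ F (p + w + g) + ε / 2 := by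
  have ha := hF.ratio_pos
  rw [hF.right h h1]
  rcases le_total (p + w) a with hpw | hpw
  · linarith [hF.add_le_half hp hw hpw, hF.nonneg (x := (p + w + g - (1 - a)) / a)
      (div_nonneg (by linarith) ha.le)]
  have hpm := unitInterval.div_mem hp ha.le hpa
  have hsum : 1 - p / a + (p + w - a) / a = w / a := by field_simp; ring
  have := hP (1 - p / a) ((p + w - a) / a) (by linarith [hpm.2])
    (div_nonneg (by linarith) ha.le)
  rw [hsum, hF.symm _ hpm.1 hpm.2] at this
  have hmono := hF.monotone
    (div_le_div_of_nonneg_right (show p + w - a ≤ p + w + g - (1 - a) by linarith) ha.le)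
  rw [hF.left p hp hpa, hF.left w hw hwa]
  linarith

theorem add_le_map_of_one_sub_ratio_le (hF : IsCantorStaircase a F)
    (hP : SubadditiveUpTo F ε) (hR : SuperadditiveAcrossGapUpTo a F ε) (hε : 0 ≤ ε)
    {p w g : ℝ} (hp : 0 ≤ p) (hpw : p ≤ w) (hg : (1 - 2 * a) / a ≤ g)
    (h : 1 - a ≤ p + w + g) (h1 : p + w + g ≤ 1) :
    F p + F w ≤ F (p + w + g) + ε / 2 := by
  have ha := hF.ratio_pos
  have hgap := hF.middle_gap_le hg
  have ha2 := hF.ratio_le_half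
  have hw := hp.trans hpw
  rcases le_total w a with hwa | hwa
  · exact hF.add_le_map_of_le_ratio hP hε hp hw (hpw.trans hwa) hwa hgap h h1
  have hpa : p ≤ a := by linarith
  rw [hF.right h h1, hF.left p hp hpa]
  rcases le_total (1 - a) w with hwb | hwb
  · have hsum : p / a + (w - (1 - a)) / a + g / a = (p + w + g - (1 - a)) / a := by ring
    have := hR (p / a) ((w - (1 - a)) / a) (g / a) (by positivity)
      (div_nonneg (by linarith) ha.le) (hF.gap_le_div hg)
      (by rw [hsum]; exact div_le_one_of_le₀ (by linarith) ha.le)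
    rw [hsum] at this
    rw [hF.right hwb (by linarith)]
    linarith
  · have := hF.monotone
      (div_le_div_of_nonneg_right (show p ≤ p + w + g - (1 - a) by linarith) ha.le)
    linarith [hF.le_half hwb]

theorem superadditiveAcrossGapUpTo_half (hF : IsCantorStaircase a F) (hP : SubadditiveUpTo F ε)
    (hR : SuperadditiveAcrossGapUpTo a F ε) (hε : 0 ≤ ε) :
    SuperadditiveAcrossGapUpTo a F (ε / 2) := by
  intro p w g hp hw hg h
  wlog hpw : p ≤ w generalizing p w
  · simpa only [add_comm p w, add_comm (F p)] using
      this w p hw hp (by linarith) (le_of_not_ge hpw)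
  rcases le_total (p + w + g) a with ht | hta
  · exact hF.add_le_map_of_add_le_ratio hR hp hw hg ht
  rcases le_total (p + w + g) (1 - a) with ht | htb
  · linarith [hF.add_le_half hp hw (by linarith [hF.middle_gap_le hg]), hF.half_le hta]
  · exact hF.add_le_map_of_one_sub_ratio_le hP hR hε hp hpw hg htb h

theorem subadditiveUpTo_one (hF : IsCantorStaircase a F) : SubadditiveUpTo F 1 :=
  fun x y hx hy => by linarith [hF.le_one (x + y), hF.nonneg hx, hF.nonneg hy]

theorem superadditiveAcrossGapUpTo_one (hF : IsCantorStaircase a F) :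
    SuperadditiveAcrossGapUpTo a F 1 := by
  intro p w g _ hw hg _
  have hg0 : 0 ≤ g := by linarith [hF.middle_gap_le hg, hF.ratio_le_half]
  linarith [hF.monotone (show p ≤ p + w + g by linarith), hF.le_one w]

theorem map_add_le (hF : IsCantorStaircase a F) {x y : ℝ} (hx : 0 ≤ x) (hy : 0 ≤ y) :
    F (x + y) ≤ F x + F y := by
  have key : ∀ n : ℕ, SubadditiveUpTo F ((1 / 2) ^ n) ∧
      SuperadditiveAcrossGapUpTo a F ((1 / 2) ^ n) := by
    intro n
    induction n with
    | zero =>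
      simpa only [pow_zero] using ⟨hF.subadditiveUpTo_one, hF.superadditiveAcrossGapUpTo_one⟩
    | succ n ih =>
      rw [pow_succ, ← div_eq_mul_one_div]
      have hε : (0 : ℝ) ≤ (1 / 2) ^ n := by positivity
      exact ⟨hF.subadditiveUpTo_half ih.1 ih.2 hε, hF.superadditiveAcrossGapUpTo_half ih.1 ih.2 hε⟩
  have hlim : Tendsto (fun n : ℕ => F x + F y + (1 / 2 : ℝ) ^ n) atTop (𝓝 (F x + F y)) := by
    simpa only [add_zero] using
      tendsto_const_nhds.add
        (tendsto_pow_atTop_nhds_zero_of_lt_one (r := (1 / 2 : ℝ)) (by norm_num) (by norm_num))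
  exact ge_of_tendsto' hlim fun n => (key n).1 x y hx hy

end IsCantorStaircase

section CantorMap

variable {a : ℝ} {g g' : ℝ → ℝ}

theorem cantorMap_one_sub_two_mul (ha : a ≠ 0) (g : ℝ → ℝ) (x : ℝ) :
    cantorMap (1 - 2 * a) g x =
      if x < a then g (x / a) / 2
      else if x < 1 - a then 1 / 2
      else 1 / 2 + g ((x - (1 - a)) / a) / 2 := by
  have e1 : (1 - (1 - 2 * a)) / 2 = a := by ring
  have e2 : (1 + (1 - 2 * a)) / 2 = 1 - a := by ring
  have e3 : 2 / (1 - (1 - 2 * a)) * x = x / a := by field_simp; ring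
  have e4 : x / a - (1 + (1 - 2 * a)) / (1 - (1 - 2 * a)) = (x - (1 - a)) / a := by
    field_simp; ring
  simp only [cantorMap, e1, e2, e3, e4]
  split_ifs <;> ring

theorem cantorMap_mapsTo (ha : 0 < a) (hg : MapsTo g (Icc 0 1) (Icc 0 1)) :
    MapsTo (cantorMap (1 - 2 * a) g) (Icc 0 1) (Icc 0 1) := by
  intro x hx
  rw [mem_Icc, cantorMap_one_sub_two_mul ha.ne']
  split_ifs with h1 h2
  · have := hg (unitInterval.div_mem hx.1 ha.le h1.le)
    constructor <;> linarith [this.1, this.2]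
  · norm_num
  · have hmem : (x - (1 - a)) / a ∈ Icc (0 : ℝ) 1 :=
      unitInterval.div_mem (by linarith) ha.le (by linarith [hx.2])
    have := hg hmem
    constructor <;> linarith [this.1, this.2]

theorem cantorMap_le_half (ha : 0 < a) (hg : MapsTo g (Icc 0 1) (Icc 0 1)) {x : ℝ}
    (hx : 0 ≤ x) (h : x < 1 - a) : cantorMap (1 - 2 * a) g x ≤ 1 / 2 := by
  rw [cantorMap_one_sub_two_mul ha.ne']
  split_ifs with h1
  · linarith [(hg (unitInterval.div_mem hx ha.le h1.le)).2]
  · exact le_rfl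

theorem half_le_cantorMap (ha : 0 < a) (hg : MapsTo g (Icc 0 1) (Icc 0 1)) {x : ℝ}
    (h : a ≤ x) (hx : x ≤ 1) : 1 / 2 ≤ cantorMap (1 - 2 * a) g x := by
  rw [cantorMap_one_sub_two_mul ha.ne', if_neg h.not_gt]
  split_ifs with h1
  · exact le_rfl
  · have hmem : (x - (1 - a)) / a ∈ Icc (0 : ℝ) 1 :=
      unitInterval.div_mem (by linarith) ha.le (by linarith)
    linarith [(hg hmem).1]

theorem cantorMap_monotoneOn (ha : 0 < a) (ha2 : a ≤ 1 / 2)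
    (hg : MapsTo g (Icc 0 1) (Icc 0 1)) (hgm : MonotoneOn g (Icc 0 1)) :
    MonotoneOn (cantorMap (1 - 2 * a) g) (Icc 0 1) := by
  intro x hx y hy hxy
  rcases lt_or_ge y a with hya | hya
  · rw [cantorMap_one_sub_two_mul ha.ne', cantorMap_one_sub_two_mul ha.ne', if_pos hya,
      if_pos (hxy.trans_lt hya)]
    have := hgm (unitInterval.div_mem hx.1 ha.le (by linarith))
      (unitInterval.div_mem hy.1 ha.le hya.le) (div_le_div_of_nonneg_right hxy ha.le)
    linarith
  rcases lt_or_ge x (1 - a) with hxb | hxb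
  · exact (cantorMap_le_half ha hg hx.1 hxb).trans (half_le_cantorMap ha hg hya hy.2)
  rw [cantorMap_one_sub_two_mul ha.ne', cantorMap_one_sub_two_mul ha.ne',
    if_neg (by linarith), if_neg (by linarith), if_neg (by linarith), if_neg (by linarith)]
  have := hgm (unitInterval.div_mem (by linarith) ha.le (by linarith [hx.2]))
    (unitInterval.div_mem (by linarith) ha.le (by linarith [hy.2]))
    (div_le_div_of_nonneg_right (sub_le_sub_right hxy (1 - a)) ha.le)
  linarith

theorem abs_cantorMap_sub_le (ha : 0 < a) {K : ℝ} (hK : ∀ x ∈ Icc (0 : ℝ) 1, |g x - g' x| ≤ K)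
    {x : ℝ} (hx : x ∈ Icc (0 : ℝ) 1) :
    |cantorMap (1 - 2 * a) g x - cantorMap (1 - 2 * a) g' x| ≤ K / 2 := by
  rw [cantorMap_one_sub_two_mul ha.ne', cantorMap_one_sub_two_mul ha.ne']
  split_ifs with h1 h2
  · rw [← sub_div, abs_div, abs_two]
    linarith [hK _ (unitInterval.div_mem hx.1 ha.le h1.le)]
  · rw [sub_self, abs_zero]
    linarith [(abs_nonneg _).trans (hK 0 ⟨le_rfl, zero_le_one⟩)]
  · rw [add_sub_add_left_eq_sub, ← sub_div, abs_div, abs_two]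
    linarith [hK _ (unitInterval.div_mem (by linarith) ha.le (by linarith [hx.2]) :
      (x - (1 - a)) / a ∈ Icc (0 : ℝ) 1)]

theorem abs_sub_cantorSeq_le (ha : 0 < a) {c : ℝ → ℝ}
    (hc : ∀ x ∈ Icc (0 : ℝ) 1, c x = cantorMap (1 - 2 * a) c x) {M : ℝ}
    (hM : ∀ x ∈ Icc (0 : ℝ) 1, |c x - g x| ≤ M) (n : ℕ) :
    ∀ x ∈ Icc (0 : ℝ) 1, |c x - cantorSeq (1 - 2 * a) g n x| ≤ M / 2 ^ n := by
  induction n with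
  | zero => simpa only [cantorSeq, pow_zero, div_one] using hM
  | succ n ih =>
    intro x hx
    rw [hc x hx, pow_succ, ← div_div]
    exact abs_cantorMap_sub_le ha ih hx

theorem cantorSeq_zero_mapsTo (ha : 0 < a) (n : ℕ) :
    MapsTo (cantorSeq (1 - 2 * a) 0 n) (Icc 0 1) (Icc 0 1) := by
  induction n with
  | zero => exact fun _ _ => ⟨le_rfl, zero_le_one⟩
  | succ n ih => exact cantorMap_mapsTo ha ih

theorem cantorSeq_zero_monotoneOn (ha : 0 < a) (ha2 : a ≤ 1 / 2) (n : ℕ) :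
    MonotoneOn (cantorSeq (1 - 2 * a) 0 n) (Icc 0 1) := by
  induction n with
  | zero => exact monotoneOn_const
  | succ n ih => exact cantorMap_monotoneOn ha ha2 (cantorSeq_zero_mapsTo ha n) ih

end CantorMap

structure IsCantorFunction (l : ℝ) (c : ℝ → ℝ) : Prop where
  bounded : ∃ M, ∀ x ∈ Icc (0 : ℝ) 1, |c x| ≤ M
  isFixedPt : ∀ x ∈ Icc (0 : ℝ) 1, c x = cantorMap l c x

namespace IsCantorFunction

variable {a : ℝ} {c c' : ℝ → ℝ}

theorem tendsto_cantorSeq (hc : IsCantorFunction (1 - 2 * a) c) (ha : 0 < a) {x : ℝ}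
    (hx : x ∈ Icc (0 : ℝ) 1) :
    Tendsto (fun n => cantorSeq (1 - 2 * a) 0 n x) atTop (𝓝 (c x)) := by
  obtain ⟨M, hM⟩ := hc.bounded
  have hbound := abs_sub_cantorSeq_le ha hc.isFixedPt (g := 0) (M := M)
    (by simpa only [Pi.zero_apply, sub_zero] using hM)
  rw [tendsto_iff_dist_tendsto_zero]
  refine squeeze_zero (fun _ => dist_nonneg) (fun n => ?_)
    ((tendsto_const_nhds (x := M)).div_atTop (tendsto_pow_atTop_atTop_of_one_lt one_lt_two))
  rw [Real.dist_eq, abs_sub_comm]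
  exact hbound n x hx

theorem eqOn (hc : IsCantorFunction (1 - 2 * a) c) (hc' : IsCantorFunction (1 - 2 * a) c')
    (ha : 0 < a) : EqOn c c' (Icc 0 1) :=
  fun _ hx => tendsto_nhds_unique (hc.tendsto_cantorSeq ha hx) (hc'.tendsto_cantorSeq ha hx)

theorem mapsTo (hc : IsCantorFunction (1 - 2 * a) c) (ha : 0 < a) :
    MapsTo c (Icc 0 1) (Icc 0 1) := fun _ hx =>
  isClosed_Icc.mem_of_tendsto (hc.tendsto_cantorSeq ha hx)
    (Eventually.of_forall fun n => cantorSeq_zero_mapsTo ha n hx)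

theorem monotoneOn (hc : IsCantorFunction (1 - 2 * a) c) (ha : 0 < a) (ha2 : a ≤ 1 / 2) :
    MonotoneOn c (Icc 0 1) := fun _ hx _ hy hxy =>
  le_of_tendsto_of_tendsto' (hc.tendsto_cantorSeq ha hx) (hc.tendsto_cantorSeq ha hy)
    fun n => cantorSeq_zero_monotoneOn ha ha2 n hx hy hxy

theorem map_zero (hc : IsCantorFunction (1 - 2 * a) c) (ha : 0 < a) : c 0 = 0 := by
  have h := hc.isFixedPt 0 ⟨le_rfl, zero_le_one⟩
  rw [cantorMap_one_sub_two_mul ha.ne', if_pos ha, zero_div] at h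
  linarith

theorem right (hc : IsCantorFunction (1 - 2 * a) c) (ha : 0 < a) (ha2 : a ≤ 1 / 2) {x : ℝ}
    (hx : 1 - a ≤ x) (hx1 : x ≤ 1) : c x = 1 / 2 + c ((x - (1 - a)) / a) / 2 := by
  rw [hc.isFixedPt x ⟨by linarith, hx1⟩, cantorMap_one_sub_two_mul ha.ne',
    if_neg (by linarith), if_neg (by linarith)]

theorem map_one (hc : IsCantorFunction (1 - 2 * a) c) (ha : 0 < a) (ha2 : a ≤ 1 / 2) :
    c 1 = 1 := by
  have h := hc.right ha ha2 (x := 1) (by linarith) le_rfl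
  rw [sub_sub_cancel, div_self ha.ne'] at h
  linarith

theorem middle (hc : IsCantorFunction (1 - 2 * a) c) (ha : 0 < a) (ha2 : a ≤ 1 / 2) {x : ℝ}
    (hx : a ≤ x) (hx1 : x ≤ 1 - a) : c x = 1 / 2 := by
  rcases hx1.lt_or_eq with hx1 | rfl
  · rw [hc.isFixedPt x ⟨by linarith, by linarith⟩, cantorMap_one_sub_two_mul ha.ne',
      if_neg hx.not_gt, if_pos hx1]
  · rw [hc.right ha ha2 le_rfl (by linarith), sub_self, zero_div, hc.map_zero ha]
    norm_num

theorem left (hc : IsCantorFunction (1 - 2 * a) c) (ha : 0 < a) (ha2 : a ≤ 1 / 2) {x : ℝ}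
    (hx : 0 ≤ x) (hxa : x ≤ a) : c x = c (x / a) / 2 := by
  rcases hxa.lt_or_eq with hxa | rfl
  · rw [hc.isFixedPt x ⟨hx, by linarith⟩, cantorMap_one_sub_two_mul ha.ne', if_pos hxa]
  · rw [hc.middle ha ha2 le_rfl (by linarith), div_self ha.ne', hc.map_one ha ha2]

theorem reflect (hc : IsCantorFunction (1 - 2 * a) c) (ha : 0 < a) (ha2 : a ≤ 1 / 2) :
    IsCantorFunction (1 - 2 * a) (fun x => 1 - c (1 - x)) := by
  refine ⟨⟨1, fun x hx => ?_⟩, fun x hx => ?_⟩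
  · have := hc.mapsTo ha (x := 1 - x) ⟨by linarith [hx.2], by linarith [hx.1]⟩
    rw [abs_le]
    constructor <;> linarith [this.1, this.2]
  rw [cantorMap_one_sub_two_mul ha.ne']
  split_ifs with h1 h2
  · rw [hc.right ha ha2 (by linarith) (by linarith [hx.1]),
      show 1 - x - (1 - a) = a - x by ring, show 1 - x / a = (a - x) / a by field_simp]
    ring
  · rw [hc.middle ha ha2 (by linarith) (by linarith)]
    norm_num
  · rw [hc.left ha ha2 (by linarith [hx.2]) (by linarith),
      show 1 - (x - (1 - a)) / a = (1 - x) / a by field_simp; ring]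
    ring

theorem symm (hc : IsCantorFunction (1 - 2 * a) c) (ha : 0 < a) (ha2 : a ≤ 1 / 2) {x : ℝ}
    (hx : x ∈ Icc (0 : ℝ) 1) : c (1 - x) = 1 - c x := by
  have := (hc.reflect ha ha2).eqOn hc ha hx
  simp only at this
  linarith

end IsCantorFunction

theorem extendUnit_of_mem {c : ℝ → ℝ} {x : ℝ} (hx : x ∈ Icc (0 : ℝ) 1) :
    extendUnit c x = c x := by
  rw [extendUnit, if_neg hx.1.not_gt, if_pos hx.2]

theorem extendUnit_of_one_lt {c : ℝ → ℝ} {x : ℝ} (hx : 1 < x) : extendUnit c x = 1 := by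
  rw [extendUnit, if_neg (by linarith), if_neg hx.not_ge]

theorem extendUnit_mem {c : ℝ → ℝ} (hc : MapsTo c (Icc 0 1) (Icc 0 1)) (x : ℝ) :
    extendUnit c x ∈ Icc (0 : ℝ) 1 := by
  unfold extendUnit
  split_ifs with h0 h1
  · exact ⟨le_rfl, zero_le_one⟩
  · exact hc ⟨not_lt.mp h0, h1⟩
  · exact ⟨zero_le_one, le_rfl⟩

theorem extendUnit_monotone {c : ℝ → ℝ} (hc : MapsTo c (Icc 0 1) (Icc 0 1))
    (hcm : MonotoneOn c (Icc 0 1)) : Monotone (extendUnit c) := by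
  intro x y hxy
  by_cases hx : x < 0
  · rw [extendUnit, if_pos hx]
    exact (extendUnit_mem hc y).1
  by_cases hy : 1 < y
  · rw [extendUnit_of_one_lt hy]
    exact (extendUnit_mem hc x).2
  have hxm : x ∈ Icc (0 : ℝ) 1 := ⟨not_lt.mp hx, by linarith⟩
  have hym : y ∈ Icc (0 : ℝ) 1 := ⟨by linarith, not_lt.mp hy⟩
  rw [extendUnit_of_mem hxm, extendUnit_of_mem hym]
  exact hcm hxm hym hxy

theorem IsCantorFunction.isCantorStaircase_extendUnit {a : ℝ} {c : ℝ → ℝ}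
    (hc : IsCantorFunction (1 - 2 * a) c) (ha : 0 < a) (ha2 : a ≤ 1 / 2) :
    IsCantorStaircase a (extendUnit c) where
  ratio_pos := ha
  ratio_le_half := ha2
  monotone := extendUnit_monotone (hc.mapsTo ha) (hc.monotoneOn ha ha2)
  eq_one x hx := by
    rcases hx.eq_or_lt with rfl | hx
    · rw [extendUnit_of_mem ⟨zero_le_one, le_rfl⟩, hc.map_one ha ha2]
    · exact extendUnit_of_one_lt hx
  left x hx hxa := by
    rw [extendUnit_of_mem ⟨hx, by linarith⟩, extendUnit_of_mem (unitInterval.div_mem hx ha.le hxa),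
      hc.left ha ha2 hx hxa]
  symm x hx hx1 := by
    rw [extendUnit_of_mem ⟨by linarith, by linarith⟩, extendUnit_of_mem ⟨hx, hx1⟩,
      hc.symm ha ha2 ⟨hx, hx1⟩]

/-- The extended middle-λ Cantor function is subadditive on nonnegative reals. -/
theorem extendedCantor_subadditive (l : ℝ) (hl : l ∈ Set.Ioo (0 : ℝ) 1)
    (c : ℝ → ℝ)
    (hcb : ∃ M, ∀ x ∈ Set.Icc (0 : ℝ) 1, |c x| ≤ M)
    (hc : ∀ x ∈ Set.Icc (0 : ℝ) 1, c x = cantorMap l c x) :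
    ∀ x y : ℝ, 0 ≤ x → 0 ≤ y →
      extendUnit c (x + y) ≤ extendUnit c x + extendUnit c y := by
  obtain ⟨a, rfl⟩ : ∃ a, l = 1 - 2 * a := ⟨(1 - l) / 2, by ring⟩
  have hF : IsCantorStaircase a (extendUnit c) :=
    IsCantorFunction.isCantorStaircase_extendUnit ⟨hcb, hc⟩ (by linarith [hl.2])
      (by linarith [hl.1])
  exact fun x y hx hy => hF.map_add_le hx hy
end

section
/- The middle-λ Cantor function c is Hölder continuous of exponent H_λ = log 2 / (log 2 - log(1-λ)) with constant 1: for all x, y ∈ [0,1], |c(x) - c(y)| ≤ |x - y|^{H_λ}. -/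
/-!
Put `r = (1 - λ) / 2` and `H = log 2 / log r⁻¹`, so that `r ^ H = 1 / 2` and `0 < H ≤ 1`. On
`[0, r)` and on `[1 - r, 1]` the function `c` is a copy of itself scaled by `r` in the variable and
by `1 / 2` in value, and `c = 1 / 2` on the gap between them. Each of the bounds `|c t| ≤ t ^ H`,
`|1 - c t| ≤ (1 - t) ^ H` and `|c x - c y| ≤ |x - y| ^ H` is self-improving: if it holds up to an
additive error `ε`, self-similarity gives it up to `ε / 2`, because `r ^ H = 1 / 2`. For points
in different pieces the last bound follows from the first two, through the value `1 / 2` on the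
gap and the concavity of `t ↦ t ^ H`. As `c` is bounded, the bounds hold with some error to begin
with, hence exactly.
-/

open Set Real

open Filter Topology

theorem le_of_le_add_of_forall_le_add_half {α : Type*} {s : Set α} {f g : α → ℝ} {B : ℝ}
    (hB : ∀ p ∈ s, f p ≤ g p + B)
    (hhalf : ∀ ε, 0 ≤ ε → (∀ p ∈ s, f p ≤ g p + ε) → ∀ p ∈ s, f p ≤ g p + ε / 2) :
    ∀ p ∈ s, f p ≤ g p := by
  have hpow : ∀ n : ℕ, ∀ p ∈ s, f p ≤ g p + |B| * (1 / 2) ^ n := by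
    intro n
    induction n with
    | zero => simpa using fun p hp => (hB p hp).trans (by gcongr; exact le_abs_self B)
    | succ n ih =>
      intro p hp
      have := hhalf _ (by positivity) ih p hp
      rw [pow_succ]
      linarith
  intro p hp
  have hlim : Tendsto (fun n : ℕ => g p + |B| * (1 / 2) ^ n) atTop (𝓝 (g p)) := by
    simpa using ((tendsto_pow_atTop_nhds_zero_of_lt_one (by norm_num)
      (by norm_num : (1 / 2 : ℝ) < 1)).const_mul |B|).const_add (g p)
  exact ge_of_tendsto' hlim fun n => hpow n p hp

theorem rpow_add_rpow_div_two_le {p a b : ℝ} (hp₀ : 0 ≤ p) (hp₁ : p ≤ 1) (ha : 0 ≤ a)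
    (hb : 0 ≤ b) : (a ^ p + b ^ p) / 2 ≤ ((a + b) / 2) ^ p := by
  have := (concaveOn_rpow hp₀ hp₁).2 (mem_Ici.2 ha) (mem_Ici.2 hb)
    (by norm_num : (0 : ℝ) ≤ 1 / 2) (by norm_num : (0 : ℝ) ≤ 1 / 2) (by norm_num)
  rw [show (a + b) / 2 = 1 / 2 * a + 1 / 2 * b by ring]
  simp only [smul_eq_mul] at this
  linarith

/-- Similarity dimension of the Cantor set made of two copies of itself scaled by `r`. -/
noncomputable def cantorDim (r : ℝ) : ℝ := log 2 / log r⁻¹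

section cantorDim

variable {r : ℝ}

theorem cantorDim_pos (hr₀ : 0 < r) (hr₁ : r < 1) : 0 < cantorDim r :=
  div_pos (log_pos one_lt_two) (log_pos (one_lt_inv₀ hr₀ |>.2 hr₁))

theorem cantorDim_le_one (hr₀ : 0 < r) (hr : r ≤ 1 / 2) : cantorDim r ≤ 1 := by
  have h2 : 2 ≤ r⁻¹ := by rw [le_inv_comm₀ two_pos hr₀]; linarith
  exact div_le_one_of_le₀ (log_le_log two_pos h2) (log_nonneg (by linarith))

theorem rpow_cantorDim (hr₀ : 0 < r) (hr₁ : r < 1) : r ^ cantorDim r = 1 / 2 := by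
  have hlog : log r ≠ 0 := (log_neg hr₀ hr₁).ne
  have : log r * cantorDim r = -log 2 := by
    rw [cantorDim, log_inv]
    field_simp
  rw [rpow_def_of_pos hr₀, this, exp_neg, exp_log two_pos, one_div]

theorem div_rpow_cantorDim_div_two (hr₀ : 0 < r) (hr₁ : r < 1) {t : ℝ} (ht : 0 ≤ t) :
    (t / r) ^ cantorDim r / 2 = t ^ cantorDim r := by
  rw [div_rpow ht hr₀.le, rpow_cantorDim hr₀ hr₁]
  ring

/-- Across the gap, of length `1 - 2 * r`, the power `t ^ cantorDim r` grows by at least the `1 / 2`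
that `c` gains there. -/
theorem rpow_cantorDim_add_half_le (hr₀ : 0 < r) (hr : r ≤ 1 / 2) {s : ℝ} (hs₀ : 0 ≤ s)
    (hs : s ≤ r) : s ^ cantorDim r + 1 / 2 ≤ (s + (1 - r)) ^ cantorDim r := by
  have hr₁ : r < 1 := by linarith
  set H := cantorDim r
  set u := s / r
  have hu₀ : 0 ≤ u := div_nonneg hs₀ hr₀.le
  have hu₁ : u ≤ 1 := (div_le_one hr₀).2 hs
  have hsu : s = r * u := (mul_div_cancel₀ s hr₀.ne').symm
  have huH : u ^ H ≤ 1 := rpow_le_one hu₀ hu₁ (cantorDim_pos hr₀ hr₁).le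
  have hconc := (concaveOn_rpow (cantorDim_pos hr₀ hr₁).le (cantorDim_le_one hr₀ hr)).2
    (mem_Ici.2 hu₀) (mem_Ici.2 zero_le_one) hr₀.le (by linarith : 0 ≤ 1 - r) (by ring)
  simp only [smul_eq_mul, mul_one, one_rpow] at hconc
  calc s ^ H + 1 / 2 = u ^ H / 2 + 1 / 2 := by rw [div_rpow_cantorDim_div_two hr₀ hr₁ hs₀]
    _ ≤ r * u ^ H + (1 - r) := by nlinarith [mul_nonneg (sub_nonneg.2 hr) (sub_nonneg.2 huH)]
    _ ≤ (r * u + (1 - r)) ^ H := hconc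
    _ = (s + (1 - r)) ^ H := by rw [← hsu]

end cantorDim

/-- The fixed-point equation of `cantorMap l` on `[0, 1]`, written with the scaling ratio
`r = (1 - l) / 2`. -/
structure IsCantorFunction_s7 (r : ℝ) (c : ℝ → ℝ) : Prop where
  left : ∀ t, 0 ≤ t → t < r → c t = c (t / r) / 2
  gap : ∀ t, r ≤ t → t < 1 - r → c t = 1 / 2
  right : ∀ t, 1 - r ≤ t → t ≤ 1 → c t = (1 + c ((t - (1 - r)) / r)) / 2

theorem isCantorFunction_of_eq_cantorMap {l : ℝ} {c : ℝ → ℝ} (hl₀ : 0 ≤ l) (hl₁ : l < 1)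
    (hc : ∀ x ∈ Icc (0 : ℝ) 1, c x = cantorMap l c x) : IsCantorFunction_s7 ((1 - l) / 2) c where
  left t ht₀ ht := by
    rw [hc t ⟨ht₀, by linarith⟩, cantorMap, if_pos ht,
      show 2 / (1 - l) * t = t / ((1 - l) / 2) by field_simp]
    ring
  gap t ht₀ ht := by
    rw [hc t ⟨by linarith, by linarith⟩, cantorMap, if_neg (not_lt.2 ht₀), if_pos (by linarith)]
  right t ht₀ ht := by
    rw [hc t ⟨by linarith, ht⟩, cantorMap, if_neg (by linarith), if_neg (by linarith),
      show 2 / (1 - l) * t - (1 + l) / (1 - l) = (t - (1 - (1 - l) / 2)) / ((1 - l) / 2) by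
        field_simp; ring]
    ring

namespace IsCantorFunction_s7

variable {r : ℝ} {c : ℝ → ℝ}

theorem abs_le_rpow_add_half (hc : IsCantorFunction_s7 r c) (hr₀ : 0 < r) (hr : r ≤ 1 / 2)
    {ε : ℝ} (hε : 0 ≤ ε) (h : ∀ t ∈ Icc (0 : ℝ) 1, |c t| ≤ t ^ cantorDim r + ε) :
    ∀ t ∈ Icc (0 : ℝ) 1, |c t| ≤ t ^ cantorDim r + ε / 2 := by
  have hr₁ : r < 1 := by linarith
  set H := cantorDim r
  rintro t ⟨ht₀, ht₁⟩
  rcases lt_or_ge t r with hlt | hge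
  · have := h (t / r) ⟨by positivity, (div_le_one hr₀).2 hlt.le⟩
    rw [hc.left t ht₀ hlt, abs_div, abs_two, ← div_rpow_cantorDim_div_two hr₀ hr₁ ht₀]
    linarith
  rcases lt_or_ge t (1 - r) with hlt' | hge'
  · rw [hc.gap t hge hlt', abs_of_pos one_half_pos, ← rpow_cantorDim hr₀ hr₁]
    have := rpow_le_rpow hr₀.le hge (cantorDim_pos hr₀ hr₁).le
    linarith
  · set s := t - (1 - r)
    have hs : 0 ≤ s := by linarith
    have := h (s / r) ⟨by positivity, (div_le_one hr₀).2 (by linarith)⟩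
    have hK := rpow_cantorDim_add_half_le hr₀ hr hs (by linarith)
    rw [sub_add_cancel] at hK
    calc |c t| ≤ (1 + |c (s / r)|) / 2 := by
          rw [hc.right t hge' ht₁, abs_div, abs_two]
          gcongr
          exact (abs_add_le _ _).trans (by rw [abs_one])
      _ ≤ (1 + ((s / r) ^ H + ε)) / 2 := by gcongr
      _ = s ^ H + 1 / 2 + ε / 2 := by rw [← div_rpow_cantorDim_div_two hr₀ hr₁ hs]; ring
      _ ≤ t ^ H + ε / 2 := by linarith

theorem abs_one_sub_le_rpow_add_half (hc : IsCantorFunction_s7 r c) (hr₀ : 0 < r) (hr : r ≤ 1 / 2)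
    {ε : ℝ} (hε : 0 ≤ ε) (h : ∀ t ∈ Icc (0 : ℝ) 1, |1 - c t| ≤ (1 - t) ^ cantorDim r + ε) :
    ∀ t ∈ Icc (0 : ℝ) 1, |1 - c t| ≤ (1 - t) ^ cantorDim r + ε / 2 := by
  have hr₁ : r < 1 := by linarith
  set H := cantorDim r
  rintro t ⟨ht₀, ht₁⟩
  rcases lt_or_ge t r with hlt | hge
  · have := h (t / r) ⟨by positivity, (div_le_one hr₀).2 hlt.le⟩
    have hK := rpow_cantorDim_add_half_le hr₀ hr (s := r - t) (by linarith) (by linarith)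
    rw [sub_add_sub_cancel'] at hK
    rw [show 1 - t / r = (r - t) / r by field_simp] at this
    calc |1 - c t| ≤ (1 + |1 - c (t / r)|) / 2 := by
          rw [hc.left t ht₀ hlt, show 1 - c (t / r) / 2 = (1 + (1 - c (t / r))) / 2 by ring,
            abs_div, abs_two]
          gcongr
          exact (abs_add_le _ _).trans (by rw [abs_one])
      _ ≤ (1 + (((r - t) / r) ^ H + ε)) / 2 := by gcongr
      _ = (r - t) ^ H + 1 / 2 + ε / 2 := by
          rw [← div_rpow_cantorDim_div_two hr₀ hr₁ (by linarith : 0 ≤ r - t)]; ring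
      _ ≤ (1 - t) ^ H + ε / 2 := by linarith
  rcases lt_or_ge t (1 - r) with hlt' | hge'
  · rw [hc.gap t hge hlt', show (1 : ℝ) - 1 / 2 = 1 / 2 by norm_num, abs_of_pos one_half_pos,
      ← rpow_cantorDim hr₀ hr₁]
    have := rpow_le_rpow hr₀.le (by linarith : r ≤ 1 - t) (cantorDim_pos hr₀ hr₁).le
    linarith
  · set s := t - (1 - r)
    have := h (s / r) ⟨by positivity, (div_le_one hr₀).2 (by linarith)⟩
    rw [show 1 - s / r = (1 - t) / r by field_simp; ring] at this
    rw [hc.right t hge' ht₁, show 1 - (1 + c (s / r)) / 2 = (1 - c (s / r)) / 2 by ring,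
      abs_div, abs_two, ← div_rpow_cantorDim_div_two hr₀ hr₁ (by linarith : 0 ≤ 1 - t)]
    linarith

theorem abs_le_rpow (hc : IsCantorFunction_s7 r c) (hr₀ : 0 < r) (hr : r ≤ 1 / 2) {M : ℝ}
    (hM : ∀ t ∈ Icc (0 : ℝ) 1, |c t| ≤ M) : ∀ t ∈ Icc (0 : ℝ) 1, |c t| ≤ t ^ cantorDim r :=
  le_of_le_add_of_forall_le_add_half
    (fun t ht => (hM t ht).trans (le_add_of_nonneg_left (rpow_nonneg ht.1 _)))
    fun _ hε h => hc.abs_le_rpow_add_half hr₀ hr hε h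

theorem abs_one_sub_le_rpow (hc : IsCantorFunction_s7 r c) (hr₀ : 0 < r) (hr : r ≤ 1 / 2) {M : ℝ}
    (hM : ∀ t ∈ Icc (0 : ℝ) 1, |c t| ≤ M) :
    ∀ t ∈ Icc (0 : ℝ) 1, |1 - c t| ≤ (1 - t) ^ cantorDim r := by
  refine le_of_le_add_of_forall_le_add_half (B := 1 + M) (fun t ht => ?_)
    fun _ hε h => hc.abs_one_sub_le_rpow_add_half hr₀ hr hε h
  have := rpow_nonneg (sub_nonneg.2 ht.2) (cantorDim r)
  have := hM t ht
  have := abs_sub (1 : ℝ) (c t)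
  rw [abs_one] at this
  linarith

theorem abs_sub_half_le_of_lt (hc : IsCantorFunction_s7 r c) (hr₀ : 0 < r) (hr : r ≤ 1 / 2)
    {M : ℝ} (hM : ∀ t ∈ Icc (0 : ℝ) 1, |c t| ≤ M) {x : ℝ} (hx₀ : 0 ≤ x) (hx : x < r) :
    |c x - 1 / 2| ≤ (r - x) ^ cantorDim r := by
  have hr₁ : r < 1 := by linarith
  have := hc.abs_one_sub_le_rpow hr₀ hr hM (x / r) ⟨by positivity, (div_le_one hr₀).2 hx.le⟩
  rw [show 1 - x / r = (r - x) / r by field_simp] at this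
  rw [hc.left x hx₀ hx, show c (x / r) / 2 - 1 / 2 = -((1 - c (x / r)) / 2) by ring, abs_neg,
    abs_div, abs_two, ← div_rpow_cantorDim_div_two hr₀ hr₁ (by linarith : 0 ≤ r - x)]
  linarith

theorem abs_sub_half_le_of_le (hc : IsCantorFunction_s7 r c) (hr₀ : 0 < r) (hr : r ≤ 1 / 2)
    {M : ℝ} (hM : ∀ t ∈ Icc (0 : ℝ) 1, |c t| ≤ M) {y : ℝ} (hy : 1 - r ≤ y) (hy₁ : y ≤ 1) :
    |c y - 1 / 2| ≤ (y - (1 - r)) ^ cantorDim r := by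
  have hr₁ : r < 1 := by linarith
  have hy' : 0 ≤ y - (1 - r) := by linarith
  have := hc.abs_le_rpow hr₀ hr hM ((y - (1 - r)) / r)
    ⟨by positivity, (div_le_one hr₀).2 (by linarith)⟩
  rw [hc.right y hy hy₁, show (1 + c ((y - (1 - r)) / r)) / 2 - 1 / 2 = c ((y - (1 - r)) / r) / 2
    by ring, abs_div, abs_two, ← div_rpow_cantorDim_div_two hr₀ hr₁ hy']
  linarith

theorem abs_sub_le_rpow_of_lt_of_le (hc : IsCantorFunction_s7 r c) (hr₀ : 0 < r)
    (hr : r ≤ 1 / 2) {M : ℝ} (hM : ∀ t ∈ Icc (0 : ℝ) 1, |c t| ≤ M) {x y : ℝ} (hx₀ : 0 ≤ x)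
    (hxy : x ≤ y) (hy₁ : y ≤ 1) (hx : x < 1 - r) (hy : r ≤ y) :
    |c x - c y| ≤ (y - x) ^ cantorDim r := by
  have hr₁ : r < 1 := by linarith
  have hH := cantorDim_pos hr₀ hr₁
  set H := cantorDim r
  rcases lt_or_ge x r with hxr | hxr <;> rcases lt_or_ge y (1 - r) with hyr | hyr
  · rw [hc.gap y hy hyr]
    exact (hc.abs_sub_half_le_of_lt hr₀ hr hM hx₀ hxr).trans
      (rpow_le_rpow (by linarith) (by linarith) hH.le)
  · have ha : 0 ≤ r - x := by linarith
    have hb : 0 ≤ y - (1 - r) := by linarith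
    have hmid : (r - x + (y - (1 - r))) / 2 ≤ r * (y - x) := by nlinarith
    calc |c x - c y| ≤ |c x - 1 / 2| + |c y - 1 / 2| := by
          rw [abs_sub_comm (c y)]; exact abs_sub_le _ _ _
      _ ≤ (r - x) ^ H + (y - (1 - r)) ^ H := by
          gcongr
          exacts [hc.abs_sub_half_le_of_lt hr₀ hr hM hx₀ hxr,
            hc.abs_sub_half_le_of_le hr₀ hr hM hyr hy₁]
      _ ≤ 2 * ((r - x + (y - (1 - r))) / 2) ^ H := by
          linarith [rpow_add_rpow_div_two_le hH.le (cantorDim_le_one hr₀ hr) ha hb]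
      _ ≤ 2 * (r * (y - x)) ^ H := by gcongr
      _ = (y - x) ^ H := by rw [mul_rpow hr₀.le (by linarith), rpow_cantorDim hr₀ hr₁]; ring
  · rw [hc.gap x hxr hx, hc.gap y hy hyr, sub_self, abs_zero]
    exact rpow_nonneg (by linarith) _
  · rw [hc.gap x hxr hx, abs_sub_comm]
    exact (hc.abs_sub_half_le_of_le hr₀ hr hM hyr hy₁).trans
      (rpow_le_rpow (by linarith) (by linarith) hH.le)

theorem abs_sub_le_rpow_add_half (hc : IsCantorFunction_s7 r c) (hr₀ : 0 < r) (hr : r ≤ 1 / 2)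
    {M : ℝ} (hM : ∀ t ∈ Icc (0 : ℝ) 1, |c t| ≤ M) {ε : ℝ} (hε : 0 ≤ ε)
    (h : ∀ p ∈ Icc (0 : ℝ) 1 ×ˢ Icc (0 : ℝ) 1, |c p.1 - c p.2| ≤ |p.1 - p.2| ^ cantorDim r + ε) :
    ∀ p ∈ Icc (0 : ℝ) 1 ×ˢ Icc (0 : ℝ) 1,
      |c p.1 - c p.2| ≤ |p.1 - p.2| ^ cantorDim r + ε / 2 := by
  have hr₁ : r < 1 := by linarith
  rintro ⟨x, y⟩ ⟨⟨hx₀, hx₁⟩, ⟨hy₀, hy₁⟩⟩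
  dsimp only at hx₀ hx₁ hy₀ hy₁ ⊢
  wlog hxy : x ≤ y generalizing x y
  · rw [abs_sub_comm (c x), abs_sub_comm x]
    exact this y x hy₀ hy₁ hx₀ hx₁ (le_of_not_ge hxy)
  rw [abs_sub_comm x, abs_of_nonneg (sub_nonneg.2 hxy)]
  have rescale : ∀ u ∈ Icc (0 : ℝ) 1, ∀ v ∈ Icc (0 : ℝ) 1, u - v = (x - y) / r →
      c x - c y = (c u - c v) / 2 → |c x - c y| ≤ (y - x) ^ cantorDim r + ε / 2 := by
    intro u hu v hv huv hcuv
    have := h (u, v) ⟨hu, hv⟩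
    dsimp only at this
    rw [huv, abs_div, abs_of_pos hr₀, abs_sub_comm x, abs_of_nonneg (sub_nonneg.2 hxy)] at this
    rw [hcuv, abs_div, abs_two, ← div_rpow_cantorDim_div_two hr₀ hr₁ (sub_nonneg.2 hxy)]
    linarith
  rcases lt_or_ge y r with hyr | hyr
  · refine rescale (x / r) ⟨by positivity, (div_le_one hr₀).2 (by linarith)⟩
      (y / r) ⟨by positivity, (div_le_one hr₀).2 hyr.le⟩ (sub_div _ _ _).symm ?_
    rw [hc.left x hx₀ (by linarith), hc.left y hy₀ hyr]
    ring
  rcases lt_or_ge x (1 - r) with hxr | hxr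
  · exact (hc.abs_sub_le_rpow_of_lt_of_le hr₀ hr hM hx₀ hxy hy₁ hxr hyr).trans
      (le_add_of_nonneg_right (by positivity))
  · refine rescale ((x - (1 - r)) / r) ⟨by bound, (div_le_one hr₀).2 (by linarith)⟩
      ((y - (1 - r)) / r) ⟨by bound, (div_le_one hr₀).2 (by linarith)⟩
      (by rw [← sub_div, sub_sub_sub_cancel_right]) ?_
    rw [hc.right x hxr hx₁, hc.right y (by linarith) hy₁]
    ring

theorem abs_sub_le_rpow (hc : IsCantorFunction_s7 r c) (hr₀ : 0 < r) (hr : r ≤ 1 / 2)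
    {M : ℝ} (hM : ∀ t ∈ Icc (0 : ℝ) 1, |c t| ≤ M) :
    ∀ x ∈ Icc (0 : ℝ) 1, ∀ y ∈ Icc (0 : ℝ) 1, |c x - c y| ≤ |x - y| ^ cantorDim r := by
  have key := le_of_le_add_of_forall_le_add_half (s := Icc (0 : ℝ) 1 ×ˢ Icc (0 : ℝ) 1)
    (f := fun p => |c p.1 - c p.2|) (g := fun p => |p.1 - p.2| ^ cantorDim r) (B := 2 * M) ?_
    fun _ hε h => hc.abs_sub_le_rpow_add_half hr₀ hr hM hε h
  · exact fun x hx y hy => key (x, y) ⟨hx, hy⟩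
  · rintro ⟨x, y⟩ ⟨hx, hy⟩
    have := abs_sub (c x) (c y)
    have := hM x hx
    have := hM y hy
    have := rpow_nonneg (abs_nonneg (x - y)) (cantorDim r)
    dsimp only
    linarith

end IsCantorFunction_s7

/-- The middle-λ Cantor function is Hölder continuous with exponent
`H_λ = log 2 / (log 2 - log (1 - λ))` and constant 1 on `[0,1]`. -/
theorem cantorFun_holder (l : ℝ) (hl : l ∈ Set.Ioo (0 : ℝ) 1)
    (c : ℝ → ℝ)
    (hcb : ∃ M, ∀ x ∈ Set.Icc (0 : ℝ) 1, |c x| ≤ M)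
    (hc : ∀ x ∈ Set.Icc (0 : ℝ) 1, c x = cantorMap l c x) :
    ∀ x ∈ Set.Icc (0 : ℝ) 1, ∀ y ∈ Set.Icc (0 : ℝ) 1,
      |c x - c y| ≤ |x - y| ^ (Real.log 2 / (Real.log 2 - Real.log (1 - l))) := by
  obtain ⟨hl₀, hl₁⟩ := hl
  obtain ⟨M, hM⟩ := hcb
  rw [show Real.log 2 - Real.log (1 - l) = Real.log ((1 - l) / 2)⁻¹ by
    rw [inv_div, log_div two_ne_zero (by linarith)]]
  exact (isCantorFunction_of_eq_cantorMap hl₀.le hl₁ hc).abs_sub_le_rpow (by linarith)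
    (by linarith) hM
end

section
/- c(h) ≤ h^{H_λ} for all h ∈ [0,1], where c is the middle-λ Cantor function and H_λ = log 2 / (log 2 - log(1-λ)). -/
/-!
The exponent is `H = log_{2/(1-λ)} 2`, so `x ↦ x ^ H` scales like `c` on the left piece:
`(2x/(1-λ)) ^ H = 2 x ^ H`. On the middle gap `x ^ H ≥ ((1-λ)/2) ^ H = 1/2`, and on the right
piece concavity of `t ↦ t ^ H` gives `1/2 + y ^ H / 2 ≤ x ^ H` for the rescaled point `y`.
Hence `cantorMap` turns a bound `c x ≤ x ^ H + ε` into `c x ≤ x ^ H + ε / 2`; iterating from the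
trivial bound `ε = sup |c|` and letting the error go to `0` gives the claim.
-/

open Set Real

open Filter Topology

theorem ConcaveOn.map_add_sub_map_le_of_le {S : Set ℝ} {f : ℝ → ℝ} (hf : ConcaveOn ℝ S f)
    {t u d : ℝ} (ht : t ∈ S) (hud : u + d ∈ S) (htu : t ≤ u) (hd : 0 ≤ d) :
    f (u + d) - f u ≤ f (t + d) - f t := by
  rcases (add_nonneg (sub_nonneg.2 htu) hd).eq_or_lt with hD | hD
  · obtain rfl : t = u := by linarith
    obtain rfl : d = 0 := by linarith
    rfl
  -- `u` and `t + d` are the two convex combinations of `t` and `u + d` with swapped weights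
  set a := d / (u - t + d)
  have ha : 0 ≤ a := div_nonneg hd hD.le
  have ha' : 0 ≤ 1 - a := by rw [sub_nonneg, div_le_one hD]; linarith
  have hu := hf.2 ht hud ha ha' (add_sub_cancel a 1)
  have htd := hf.2 ht hud ha' ha (sub_add_cancel 1 a)
  simp only [smul_eq_mul] at hu htd
  rw [show a * t + (1 - a) * (u + d) = u by simp only [a]; field_simp; ring] at hu
  rw [show (1 - a) * t + a * (u + d) = t + d by simp only [a]; field_simp; ring] at htd
  linarith

theorem one_add_rpow_le_add_rpow {p d t : ℝ} (hp₀ : 0 ≤ p) (hp₁ : p ≤ 1) (hd : 0 ≤ d)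
    (ht : t ∈ Icc (0 : ℝ) 1) : (1 + d) ^ p + t ^ p ≤ (t + d) ^ p + 1 := by
  have := (concaveOn_rpow hp₀ hp₁).map_add_sub_map_le_of_le ht.1
    (by simp only [mem_Ici]; linarith) ht.2 hd
  simp only [one_rpow] at this
  linarith

noncomputable def cantorExponent (l : ℝ) : ℝ := log 2 / (log 2 - log (1 - l))

section cantorExponent

variable {l : ℝ}

theorem cantorExponent_eq_logb (hl : l < 1) : cantorExponent l = logb (2 / (1 - l)) 2 := by
  rw [cantorExponent, logb, log_div two_ne_zero (by linarith)]

theorem two_le_two_div_one_sub (hl : l ∈ Ico 0 1) : 2 ≤ 2 / (1 - l) := by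
  rw [le_div_iff₀ (by linarith [hl.2])]
  nlinarith [hl.1]

theorem cantorExponent_mem_Icc (hl : l ∈ Ico 0 1) : cantorExponent l ∈ Icc 0 1 := by
  have ha := two_le_two_div_one_sub hl
  rw [cantorExponent_eq_logb hl.2]
  refine ⟨(logb_pos (by linarith) one_lt_two).le, ?_⟩
  calc logb (2 / (1 - l)) 2 ≤ logb (2 / (1 - l)) (2 / (1 - l)) :=
        logb_le_logb_of_le (by linarith) two_pos ha
    _ = 1 := logb_self_eq_one (by linarith)

theorem rpow_cantorExponent (hl : l ∈ Ico 0 1) : (2 / (1 - l)) ^ cantorExponent l = 2 := by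
  have ha := two_le_two_div_one_sub hl
  rw [cantorExponent_eq_logb hl.2, rpow_logb (by linarith) (by linarith) two_pos]

theorem rpow_cantorExponent_mul (hl : l ∈ Ico 0 1) {x : ℝ} (hx : 0 ≤ x) :
    (2 / (1 - l) * x) ^ cantorExponent l = 2 * x ^ cantorExponent l := by
  rw [mul_rpow (by linarith [two_le_two_div_one_sub hl]) hx, rpow_cantorExponent hl]

end cantorExponent

theorem cantorMap_le_rpow_add {l ε : ℝ} (hl : l ∈ Ico 0 1) (hε : 0 ≤ ε) {g : ℝ → ℝ}
    (hg : ∀ x ∈ Icc (0 : ℝ) 1, g x ≤ x ^ cantorExponent l + ε) :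
    ∀ x ∈ Icc (0 : ℝ) 1, cantorMap l g x ≤ x ^ cantorExponent l + ε / 2 := by
  intro x hx
  have h1l : 0 < 1 - l := by linarith [hl.2]
  have hH := cantorExponent_mem_Icc hl
  rw [cantorMap]
  split_ifs with hleft hmid
  · have hy : 2 / (1 - l) * x ∈ Icc (0 : ℝ) 1 :=
      ⟨by positivity [hx.1], by rw [div_mul_eq_mul_div, div_le_one h1l]; linarith⟩
    have := hg _ hy
    rw [rpow_cantorExponent_mul hl hx.1] at this
    linarith
  · have hhalf := rpow_cantorExponent_mul hl (x := (1 - l) / 2) (by positivity)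
    rw [show 2 / (1 - l) * ((1 - l) / 2) = 1 by field_simp, one_rpow] at hhalf
    have := rpow_le_rpow (by positivity) (not_lt.1 hleft) hH.1
    linarith
  -- `x = (1 - l) / 2 * (y + s)`, so `(y + s) ^ H = 2 * x ^ H`, and concavity of `t ↦ t ^ H`
  -- turns this into `1 + y ^ H ≤ 2 * x ^ H`
  · set s := (1 + l) / (1 - l)
    set y := 2 / (1 - l) * x - s
    have hy : y ∈ Icc (0 : ℝ) 1 := by
      rw [show y = (2 * x - (1 + l)) / (1 - l) by ring]
      exact ⟨div_nonneg (by linarith) h1l.le, (div_le_one h1l).2 (by linarith [hx.2])⟩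
    have hs : 1 + s = 2 / (1 - l) := by simp only [s]; field_simp; ring
    have hconc := one_add_rpow_le_add_rpow (d := s) hH.1 hH.2 (by positivity [hl.1]) hy
    rw [hs, rpow_cantorExponent hl, sub_add_cancel, rpow_cantorExponent_mul hl hx.1] at hconc
    linarith [hg y hy]

theorem le_rpow_add_div_two_pow_of_eq_cantorMap {l ε : ℝ} (hl : l ∈ Ico 0 1) (hε : 0 ≤ ε)
    {c : ℝ → ℝ} (hc : ∀ x ∈ Icc (0 : ℝ) 1, c x = cantorMap l c x)
    (hcε : ∀ x ∈ Icc (0 : ℝ) 1, c x ≤ x ^ cantorExponent l + ε) (n : ℕ) :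
    ∀ x ∈ Icc (0 : ℝ) 1, c x ≤ x ^ cantorExponent l + ε / 2 ^ n := by
  induction n with
  | zero => simpa using hcε
  | succ n ih =>
    intro x hx
    rw [hc x hx, pow_succ, ← div_div]
    exact cantorMap_le_rpow_add hl (by positivity) ih x hx

theorem le_rpow_of_eq_cantorMap {l ε : ℝ} (hl : l ∈ Ico 0 1) (hε : 0 ≤ ε)
    {c : ℝ → ℝ} (hc : ∀ x ∈ Icc (0 : ℝ) 1, c x = cantorMap l c x)
    (hcε : ∀ x ∈ Icc (0 : ℝ) 1, c x ≤ x ^ cantorExponent l + ε) :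
    ∀ x ∈ Icc (0 : ℝ) 1, c x ≤ x ^ cantorExponent l := by
  intro x hx
  have hlim : Tendsto (fun n : ℕ => x ^ cantorExponent l + ε / 2 ^ n) atTop
      (𝓝 (x ^ cantorExponent l)) := by
    simpa using tendsto_const_nhds.add
      (tendsto_const_nhds.div_atTop (tendsto_pow_atTop_atTop_of_one_lt (one_lt_two (α := ℝ))))
  exact ge_of_tendsto' hlim fun n => le_rpow_add_div_two_pow_of_eq_cantorMap hl hε hc hcε n x hx

/-- The middle-λ Cantor function satisfies `c h ≤ h ^ H_λ` for `h ∈ [0,1]`,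
where `H_λ = log 2 / (log 2 - log (1 - λ))`. -/
theorem cantorFun_le_rpow (l : ℝ) (hl : l ∈ Set.Ioo (0 : ℝ) 1)
    (c : ℝ → ℝ)
    (hcb : ∃ M, ∀ x ∈ Set.Icc (0 : ℝ) 1, |c x| ≤ M)
    (hc : ∀ x ∈ Set.Icc (0 : ℝ) 1, c x = cantorMap l c x) :
    ∀ h ∈ Set.Icc (0 : ℝ) 1,
      c h ≤ h ^ (Real.log 2 / (Real.log 2 - Real.log (1 - l))) := by
  obtain ⟨M, hM⟩ := hcb
  have hM₀ : 0 ≤ M := (abs_nonneg _).trans (hM 0 (left_mem_Icc.2 zero_le_one))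
  refine le_rpow_of_eq_cantorMap (Ioo_subset_Ico_self hl) hM₀ hc ?_
  intro x hx
  linarith [le_of_abs_le (hM x hx), rpow_nonneg hx.1 (cantorExponent l)]
end
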